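/- For all positive integers j, k, l, m, the interaction coefficient S_{j,k,l,m} is invariant under every permutation of its four indices; that is, for every permutation σ of the list (j,k,l,m), S_{j,k,l,m} = S_{σ(1),σ(2),σ(3),σ(4)}. -/
import Mathlib


open Real Set Finset

/-- The function 𝔪(j,k) = (1/2)·sgn(j)·sgn(k)·min(|j|,|k|). -/
noncomputable def frakm (j k : ℤ) : ℝ :=
  (1 / 2 : ℝ) * (j.sign : ℝ) * (k.sign : ℝ) * ((min |j| |k| : ℤ) : ℝ)

/-- The interaction coefficient S_{j,k,l,m}. -/
noncomputable def Scoef (j k l m : ℤ) : ℝ :=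
  if Even (j + k + l + m) then
    frakm (j + k - l) m + frakm (j - k + l) m + frakm (-j + k + l) m - frakm (j + k + l) m
  else 0

lemma key (a b : ℤ) : 2 * (a.sign * b.sign * min |a| |b|) = |a+b| - |a-b| := by
  rcases abs_cases (a + b) with ⟨e1, f1⟩ | ⟨e1, f1⟩ <;>
  rcases abs_cases (a - b) with ⟨e2, f2⟩ | ⟨e2, f2⟩ <;>
  rw [e1, e2] <;>
  obtain h|h|h := Int.lt_trichotomy a 0 <;> obtain h'|h'|h' := Int.lt_trichotomy b 0 <;>
  first
  | (rw [Int.sign_eq_neg_one_of_neg h, Int.sign_eq_neg_one_of_neg h', abs_of_neg h, abs_of_neg h']; omega)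
  | (rw [Int.sign_eq_neg_one_of_neg h, Int.sign_eq_one_of_pos h', abs_of_neg h, abs_of_pos h']; omega)
  | (rw [Int.sign_eq_one_of_pos h, Int.sign_eq_neg_one_of_neg h', abs_of_pos h, abs_of_neg h']; omega)
  | (rw [Int.sign_eq_one_of_pos h, Int.sign_eq_one_of_pos h', abs_of_pos h, abs_of_pos h']; omega)
  | (rw [h, Int.sign_zero]; omega)
  | (rw [h', Int.sign_zero]; omega)

lemma frakm_eq (a b : ℤ) : frakm a b = (((|a+b| - |a-b| : ℤ) : ℝ)) / 4 := by
  have h := key a b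
  have h2 : ((2 * (a.sign * b.sign * min |a| |b|) : ℤ) : ℝ) = ((|a+b| - |a-b| : ℤ) : ℝ) := by
    exact_mod_cast h
  push_cast at h2 ⊢
  unfold frakm
  push_cast
  linarith

/-- the fully symmetric numerator -/
def Nz (a b c d : ℤ) : ℤ :=
  |a+b-c+d| + |a-b+c+d| + |a-b-c-d| + |a+b+c-d|
  - |a+b-c-d| - |a-b+c-d| - |a-b-c+d| - |a+b+c+d|

lemma scoef_eq (a b c d : ℤ) :
    Scoef a b c d = if Even (a+b+c+d) then ((Nz a b c d : ℤ) : ℝ) / 4 else 0 := by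
  unfold Scoef
  split
  · rw [frakm_eq, frakm_eq, frakm_eq, frakm_eq]
    rw [show (-a+b+c)+d = -(a-b-c-d) from by ring, abs_neg,
        show (-a+b+c)-d = -(a-b-c+d) from by ring, abs_neg,
        show (a+b-c)+d = a+b-c+d from by ring,
        show (a+b-c)-d = a+b-c-d from by ring,
        show (a-b+c)+d = a-b+c+d from by ring,
        show (a-b+c)-d = a-b+c-d from by ring,
        show (a+b+c)+d = a+b+c+d from by ring,
        show (a+b+c)-d = a+b+c-d from by ring]
    unfold Nz
    push_cast
    ring
  · rfl

lemma Nz_swap12 (a b c d : ℤ) : Nz a b c d = Nz a c b d := by unfold Nz; ring_nf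

lemma Nz_swap23 (a b c d : ℤ) : Nz a b c d = Nz a b d c := by unfold Nz; ring_nf

lemma Nz_swap01 (a b c d : ℤ) : Nz a b c d = Nz b a c d := by
  unfold Nz
  rw [show b+a-c+d = a+b-c+d from by ring,
      show b-a+c+d = -(a-b-c-d) from by ring, abs_neg,
      show b-a-c-d = -(a-b+c+d) from by ring, abs_neg,
      show b+a+c-d = a+b+c-d from by ring,
      show b+a-c-d = a+b-c-d from by ring,
      show b-a+c-d = -(a-b-c+d) from by ring, abs_neg,
      show b-a-c+d = -(a-b+c-d) from by ring, abs_neg,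
      show b+a+c+d = a+b+c+d from by ring]
  ring

lemma S01 (a b c d : ℤ) : Scoef a b c d = Scoef b a c d := by
  rw [scoef_eq, scoef_eq, show b+a+c+d = a+b+c+d from by ring, ← Nz_swap01]

lemma S12 (a b c d : ℤ) : Scoef a b c d = Scoef a c b d := by
  rw [scoef_eq, scoef_eq, show a+c+b+d = a+b+c+d from by ring, ← Nz_swap12]

lemma S23 (a b c d : ℤ) : Scoef a b c d = Scoef a b d c := by
  rw [scoef_eq, scoef_eq, show a+b+d+c = a+b+c+d from by ring, ← Nz_swap23]

lemma S02 (a b c d : ℤ) : Scoef a b c d = Scoef c b a d := by rw [S12, S01, S12]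

lemma S13 (a b c d : ℤ) : Scoef a b c d = Scoef a d c b := by rw [S23, S12, S23]

lemma S03 (a b c d : ℤ) : Scoef a b c d = Scoef d b c a := by rw [S23, S12, S01, S12, S23]

lemma swap_key (v : Fin 4 → ℤ) (x y : Fin 4) :
    Scoef (v 0) (v 1) (v 2) (v 3)
      = Scoef ((v ∘ Equiv.swap x y) 0) ((v ∘ Equiv.swap x y) 1)
          ((v ∘ Equiv.swap x y) 2) ((v ∘ Equiv.swap x y) 3) := by
  fin_cases x <;> fin_cases y <;>
    simp [Equiv.swap_apply_def, Function.comp, Fin.ext_iff] <;>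
    first
      | rfl
      | exact S01 _ _ _ _
      | exact S12 _ _ _ _
      | exact S23 _ _ _ _
      | exact S02 _ _ _ _
      | exact S13 _ _ _ _
      | exact S03 _ _ _ _

lemma perm_lemma (σ : Equiv.Perm (Fin 4)) : ∀ v : Fin 4 → ℤ,
    Scoef (v 0) (v 1) (v 2) (v 3)
      = Scoef (v (σ 0)) (v (σ 1)) (v (σ 2)) (v (σ 3)) := by
  refine Equiv.Perm.swap_induction_on σ (fun v => rfl) ?_
  intro f x y hxy IH v
  calc Scoef (v 0) (v 1) (v 2) (v 3)
      = Scoef ((v ∘ Equiv.swap x y) 0) ((v ∘ Equiv.swap x y) 1)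
          ((v ∘ Equiv.swap x y) 2) ((v ∘ Equiv.swap x y) 3) := swap_key v x y
    _ = Scoef ((v ∘ Equiv.swap x y) (f 0)) ((v ∘ Equiv.swap x y) (f 1))
          ((v ∘ Equiv.swap x y) (f 2)) ((v ∘ Equiv.swap x y) (f 3)) := IH _
    _ = Scoef (v ((Equiv.swap x y * f) 0)) (v ((Equiv.swap x y * f) 1))
          (v ((Equiv.swap x y * f) 2)) (v ((Equiv.swap x y * f) 3)) := by
        simp [Equiv.Perm.mul_apply, Function.comp]

/-- the interaction coefficient is symmetric under any permutation
of its four indices. -/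
theorem interaction_symmetric (j k l m : ℤ)
    (hj : 0 < j) (hk : 0 < k) (hl : 0 < l) (hm : 0 < m)
    (σ : Equiv.Perm (Fin 4)) :
    Scoef (![j, k, l, m] 0) (![j, k, l, m] 1) (![j, k, l, m] 2) (![j, k, l, m] 3)
      = Scoef (![j, k, l, m] (σ 0)) (![j, k, l, m] (σ 1))
          (![j, k, l, m] (σ 2)) (![j, k, l, m] (σ 3)) := by
  exact perm_lemma σ ![j, k, l, m]
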